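/- Let (Ω, F, P) be a probability space, G ⊆ F a sub-σ-algebra, and let W and R⋆ be G-measurable random variables with values in [0,1]. Let r be an F-measurable random variable with values in [0,1] satisfying E[r | G] = R⋆ almost surely. Then for every η with 0 < η ≤ 1/3, (1.5η/√e)·E[(W − R⋆)²] ≤ −ln E[exp(−3η·((W − r)² − (R⋆ − r)²))]. -/

import Mathlib

open MeasureTheory Real

private lemma hoeff_scalar (R t : ℝ) (h0 : 0 ≤ R) (h1 : R ≤ 1) :
    R * Real.exp (t * (R - 1)) + (1 - R) * Real.exp (t * R) ≤ Real.exp (t ^ 2 / 8) := by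
  have ht8 : (0:ℝ) ≤ t ^ 2 / 8 := by positivity
  rcases eq_or_lt_of_le h0 with h0' | h0'
  · rw [← h0']
    simp only [zero_mul, zero_add, sub_zero, mul_zero, Real.exp_zero, one_mul]
    calc (1:ℝ) = Real.exp 0 := Real.exp_zero.symm
      _ ≤ Real.exp (t ^ 2 / 8) := Real.exp_le_exp.mpr ht8
  rcases eq_or_lt_of_le h1 with h1' | h1'
  · rw [h1']
    simp only [sub_self, mul_zero, Real.exp_zero, mul_one, one_mul, zero_mul, add_zero]
    calc (1:ℝ) = Real.exp 0 := Real.exp_zero.symm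
      _ ≤ Real.exp (t ^ 2 / 8) := Real.exp_le_exp.mpr ht8
  -- now 0 < R < 1
  have hq0 : 0 < 1 - R := by linarith
  have hd : ∀ s : ℝ, 0 < R + (1 - R) * Real.exp s := fun s =>
    add_pos h0' (mul_pos hq0 (Real.exp_pos s))
  set φ : ℝ → ℝ := fun s => (1 - R) * Real.exp s / (R + (1 - R) * Real.exp s) with hφ_def
  have hφd : ∀ s, HasDerivAt φ ((1 - R) * Real.exp s * R / (R + (1 - R) * Real.exp s) ^ 2) s := by
    intro s
    have hnum : HasDerivAt (fun s : ℝ => (1 - R) * Real.exp s) ((1 - R) * Real.exp s) s :=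
      (Real.hasDerivAt_exp s).const_mul (1 - R)
    have hden : HasDerivAt (fun s : ℝ => R + (1 - R) * Real.exp s) ((1 - R) * Real.exp s) s :=
      hnum.const_add R
    have h := hnum.div hden (ne_of_gt (hd s))
    refine h.congr_deriv ?_
    congr 1
    ring
  set G : ℝ → ℝ := fun s => s / 4 + (1 - R) - φ s with hG_def
  have hGd : ∀ s, HasDerivAt G
      (1 / 4 - (1 - R) * Real.exp s * R / (R + (1 - R) * Real.exp s) ^ 2) s := by
    intro s
    have h1' : HasDerivAt (fun s : ℝ => s / 4 + (1 - R)) (1 / 4) s := by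
      simpa using ((hasDerivAt_id s).div_const 4).add_const (1 - R)
    exact h1'.sub (hφd s)
  have hGderiv_nonneg : ∀ s, 0 ≤ 1 / 4 - (1 - R) * Real.exp s * R / (R + (1 - R) * Real.exp s) ^ 2 := by
    intro s
    rw [sub_nonneg, div_le_iff₀ (by positivity)]
    nlinarith [sq_nonneg ((1 - R) * Real.exp s - R)]
  have hGmono : Monotone G :=
    monotone_of_deriv_nonneg (fun s => (hGd s).differentiableAt)
      (fun s => by rw [(hGd s).deriv]; exact hGderiv_nonneg s)
  have hG0 : G 0 = 0 := by
    simp only [hG_def, hφ_def, Real.exp_zero, mul_one]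
    have h : R + (1 - R) = 1 := by ring
    rw [h, div_one]; ring
  set F : ℝ → ℝ := fun s => s ^ 2 / 8 + (1 - R) * s - Real.log (R + (1 - R) * Real.exp s)
    with hF_def
  have hFd : ∀ s, HasDerivAt F (G s) s := by
    intro s
    have hden : HasDerivAt (fun s : ℝ => R + (1 - R) * Real.exp s) ((1 - R) * Real.exp s) s :=
      (((Real.hasDerivAt_exp s).const_mul (1 - R))).const_add R
    have hlog : HasDerivAt (fun s : ℝ => Real.log (R + (1 - R) * Real.exp s))
        ((1 - R) * Real.exp s / (R + (1 - R) * Real.exp s)) s :=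
      hden.log (ne_of_gt (hd s))
    have hpoly : HasDerivAt (fun s : ℝ => s ^ 2 / 8 + (1 - R) * s)
        (2 * s ^ 1 / 8 + (1 - R) * 1) s := by
      exact ((hasDerivAt_pow 2 s).div_const 8).add ((hasDerivAt_id s).const_mul (1 - R))
    have h := hpoly.sub hlog
    refine h.congr_deriv ?_
    simp only [hG_def, hφ_def]
    ring
  have hFdiff : Differentiable ℝ F := fun s => (hFd s).differentiableAt
  have hF0 : F 0 = 0 := by
    simp only [hF_def, Real.exp_zero, mul_one, mul_zero]
    have h : R + (1 - R) = 1 := by ring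
    rw [h, Real.log_one]
    norm_num
  have hFnonneg : ∀ s, 0 ≤ F s := by
    intro s
    rcases le_total 0 s with hs | hs
    · have hmono := monotoneOn_of_deriv_nonneg (convex_Ici (0:ℝ))
        hFdiff.continuous.continuousOn hFdiff.differentiableOn
        (fun x hx => by
          rw [(hFd x).deriv]
          have hx0 : (0:ℝ) ≤ x := le_of_lt (by simpa using hx)
          have := hGmono hx0
          rw [hG0] at this
          exact this)
      have := hmono (Set.self_mem_Ici) (Set.mem_Ici.mpr hs) hs
      rw [hF0] at this
      exact this
    · have hanti := antitoneOn_of_deriv_nonpos (convex_Iic (0:ℝ))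
        hFdiff.continuous.continuousOn hFdiff.differentiableOn
        (fun x hx => by
          rw [(hFd x).deriv]
          have hx0 : x ≤ (0:ℝ) := le_of_lt (by simpa using hx)
          have := hGmono hx0
          rw [hG0] at this
          exact this)
      have := hanti (Set.mem_Iic.mpr hs) (Set.self_mem_Iic) hs
      rw [hF0] at this
      exact this
  have hkey : t * (R - 1) + Real.log (R + (1 - R) * Real.exp t) ≤ t ^ 2 / 8 := by
    have := hFnonneg t
    simp only [hF_def] at this
    linarith
  have hLHS : R * Real.exp (t * (R - 1)) + (1 - R) * Real.exp (t * R)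
      = Real.exp (t * (R - 1) + Real.log (R + (1 - R) * Real.exp t)) := by
    rw [Real.exp_add, Real.exp_log (hd t)]
    rw [show t * R = t * (R - 1) + t by ring, Real.exp_add]
    ring
  rw [hLHS]
  exact Real.exp_le_exp.mpr hkey

private lemma chord_lemma (x : ℝ) (h0 : 0 ≤ x) (h1 : x ≤ 1 / 2) :
    Real.exp (-x) ≤ 1 - x * Real.exp (-(1 / 2)) := by
  have hsq : Real.exp (1 / 2) * Real.exp (1 / 2) = Real.exp 1 := by
    rw [← Real.exp_add]; norm_num
  have h15 : (1.5 : ℝ) < Real.exp (1 / 2) := by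
    nlinarith [Real.exp_pos (1/2 : ℝ), Real.exp_one_gt_d9]
  have hmul : Real.exp (-(1 / 2)) * Real.exp (1 / 2) = 1 := by
    rw [← Real.exp_add]; norm_num
  have hc : Real.exp (-(1 / 2)) ≤ 2 / 3 := by
    nlinarith [Real.exp_pos (-(1/2) : ℝ)]
  have hconv := convexOn_exp.2 (Set.mem_univ (0:ℝ)) (Set.mem_univ (-(1/2):ℝ))
      (show (0:ℝ) ≤ 1 - 2 * x by linarith) (show (0:ℝ) ≤ 2 * x by linarith) (by ring)
  simp only [smul_eq_mul, mul_zero, zero_add, Real.exp_zero, mul_one] at hconv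
  rw [show 2 * x * (-(1/2) : ℝ) = -x by ring] at hconv
  nlinarith [mul_le_mul_of_nonneg_left hc h0]

set_option maxHeartbeats 1000000 in
/-- The paper's Lemma 5 (rewards): if `W, R⋆` are `G`-measurable with values in `[0,1]`,
`r` takes values in `[0,1]` with `E[r | G] = R⋆` a.s., and `0 < η ≤ 1/3`, then
`(1.5η/√e)·E[(W − R⋆)²] ≤ −ln E[exp (−3η((W−r)² − (R⋆−r)²))]`. -/
theorem stmt5 {Ω : Type*} {mG mF : MeasurableSpace Ω} (hGF : mG ≤ mF)
    (P : @Measure Ω mF) [IsProbabilityMeasure P]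
    (W Rstar : Ω → ℝ) (hW : Measurable[mG] W) (hRstarMeas : Measurable[mG] Rstar)
    (hW01 : ∀ ω, W ω ∈ Set.Icc (0 : ℝ) 1) (hRs01 : ∀ ω, Rstar ω ∈ Set.Icc (0 : ℝ) 1)
    (r : Ω → ℝ) (hr : Measurable[mF] r) (hr01 : ∀ ω, r ω ∈ Set.Icc (0 : ℝ) 1)
    (hcond : P[r|mG] =ᵐ[P] Rstar)
    (η : ℝ) (hη0 : 0 < η) (hη : η ≤ 1 / 3) :
    (1.5 * η / Real.sqrt (Real.exp 1)) * ∫ ω, (W ω - Rstar ω) ^ 2 ∂P ≤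
      - Real.log (∫ ω,
          Real.exp (-3 * η * ((W ω - r ω) ^ 2 - (Rstar ω - r ω) ^ 2)) ∂P) := by
  have hWF : Measurable[mF] W := hW.mono hGF le_rfl
  have hRF : Measurable[mF] Rstar := hRstarMeas.mono hGF le_rfl
  set c15 : ℝ := Real.exp (-(1 / 2)) * (1.5 * η) with hc15_def
  set D : Ω → ℝ := fun ω => W ω - Rstar ω with hD_def
  set T : Ω → ℝ := fun ω => -(6 * η) * D ω with hT_def
  set B : Ω → ℝ := fun ω =>
    Real.exp (-(3 * η) * D ω ^ 2) *
      (Real.exp (T ω * Rstar ω) - Real.exp (T ω * (Rstar ω - 1))) with hB_def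
  set f1 : Ω → ℝ := fun ω =>
    Real.exp (-3 * η * ((W ω - r ω) ^ 2 - (Rstar ω - r ω) ^ 2)) with hf1_def
  -- pointwise bounds
  have hDabs : ∀ ω, |D ω| ≤ 1 := fun ω => by
    simp only [hD_def]
    have h1 := hW01 ω; have h2 := hRs01 ω
    rw [abs_le]
    constructor <;> [linarith [h1.1, h2.2]; linarith [h1.2, h2.1]]
  have hDsq : ∀ ω, D ω ^ 2 ≤ 1 := fun ω => by
    have := hDabs ω
    nlinarith [abs_nonneg (D ω), sq_abs (D ω)]
  have hTabs : ∀ ω, |T ω| ≤ 2 := fun ω => by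
    simp only [hT_def]; rw [abs_mul]
    have : |(-(6 * η))| = 6 * η := by rw [abs_neg, abs_of_nonneg]; linarith
    rw [this]
    nlinarith [hDabs ω, abs_nonneg (D ω)]
  have hZabs : ∀ ω, |(W ω - r ω) ^ 2 - (Rstar ω - r ω) ^ 2| ≤ 1 := fun ω => by
    have h1 := hW01 ω; have h2 := hRs01 ω; have h3 := hr01 ω
    rw [abs_le]
    constructor <;> nlinarith [h1.1, h1.2, h2.1, h2.2, h3.1, h3.2]
  have hexpD1 : ∀ ω, Real.exp (-(3 * η) * D ω ^ 2) ≤ 1 := fun ω => by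
    rw [show (1:ℝ) = Real.exp 0 from Real.exp_zero.symm]
    apply Real.exp_le_exp.mpr
    nlinarith [sq_nonneg (D ω)]
  have hTRle : ∀ ω, T ω * Rstar ω ≤ 2 := fun ω => by
    have h1 := abs_le.mp (hTabs ω); have h2 := hRs01 ω
    nlinarith [h1.1, h1.2, h2.1, h2.2]
  have hTR1le : ∀ ω, T ω * (Rstar ω - 1) ≤ 2 := fun ω => by
    have h1 := abs_le.mp (hTabs ω); have h2 := hRs01 ω
    nlinarith [h1.1, h1.2, h2.1, h2.2]
  have hBabs : ∀ ω, |B ω| ≤ 2 * Real.exp 2 := fun ω => by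
    simp only [hB_def]; rw [abs_mul]
    have h1 : |Real.exp (-(3 * η) * D ω ^ 2)| ≤ 1 := by
      rw [abs_of_pos (Real.exp_pos _)]; exact hexpD1 ω
    have h2 : |Real.exp (T ω * Rstar ω) - Real.exp (T ω * (Rstar ω - 1))| ≤ 2 * Real.exp 2 := by
      rw [abs_le]
      have e1 : Real.exp (T ω * Rstar ω) ≤ Real.exp 2 := Real.exp_le_exp.mpr (hTRle ω)
      have e2 : Real.exp (T ω * (Rstar ω - 1)) ≤ Real.exp 2 := Real.exp_le_exp.mpr (hTR1le ω)
      have p1 := Real.exp_pos (T ω * Rstar ω)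
      have p2 := Real.exp_pos (T ω * (Rstar ω - 1))
      constructor <;> nlinarith
    calc |Real.exp (-(3 * η) * D ω ^ 2)| * |Real.exp (T ω * Rstar ω) - Real.exp (T ω * (Rstar ω - 1))|
        ≤ 1 * (2 * Real.exp 2) := by
          apply mul_le_mul h1 h2 (abs_nonneg _) zero_le_one
      _ = 2 * Real.exp 2 := by ring
  -- measurability
  have hDG : Measurable[mG] D := hW.sub hRstarMeas
  have hTG : Measurable[mG] T := hDG.const_mul (-(6 * η))
  have hBG : Measurable[mG] B :=
    (((hDG.pow_const 2).const_mul (-(3 * η))).exp).mul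
      (((hTG.mul hRstarMeas).exp).sub ((hTG.mul (hRstarMeas.sub measurable_const)).exp))
  have hBF : Measurable[mF] B := hBG.mono hGF le_rfl
  -- integrability helper
  have hint : ∀ (f : Ω → ℝ), Measurable[mF] f → ∀ Cb : ℝ, (∀ ω, |f ω| ≤ Cb) → Integrable f P :=
    fun f hf Cb hb => (integrable_const Cb).mono' hf.aestronglyMeasurable
      (Filter.Eventually.of_forall fun ω => by simpa [Real.norm_eq_abs] using hb ω)
  have hf1int : Integrable f1 P := by
    apply hint f1 _ (Real.exp 1)
    · intro ω
      simp only [hf1_def]; rw [abs_of_pos (Real.exp_pos _)]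
      apply Real.exp_le_exp.mpr
      have := abs_le.mp (hZabs ω)
      nlinarith [this.1, this.2]
    · exact ((((hWF.sub hr).pow_const 2).sub ((hRF.sub hr).pow_const 2)).const_mul (-3 * η)).exp
  have hD2int : Integrable (fun ω => D ω ^ 2) P := by
    apply hint _ (((hDG.pow_const 2)).mono hGF le_rfl) 1
    intro ω
    rw [abs_of_nonneg (sq_nonneg _)]
    exact hDsq ω
  have hBrint : Integrable (fun ω => B ω * r ω) P := by
    apply hint _ (hBF.mul hr) (2 * Real.exp 2)
    intro ω
    rw [Pi.mul_apply, abs_mul]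
    have h3 := hr01 ω
    have habs : |r ω| ≤ 1 := by rw [abs_le]; exact ⟨by linarith [h3.1], h3.2⟩
    calc |B ω| * |r ω| ≤ (2 * Real.exp 2) * 1 :=
          mul_le_mul (hBabs ω) habs (abs_nonneg _) (by positivity)
      _ = 2 * Real.exp 2 := by ring
  have hBRint : Integrable (fun ω => B ω * Rstar ω) P := by
    apply hint _ (hBF.mul hRF) (2 * Real.exp 2)
    intro ω
    rw [Pi.mul_apply, abs_mul]
    have h3 := hRs01 ω
    have habs : |Rstar ω| ≤ 1 := by rw [abs_le]; exact ⟨by linarith [h3.1], h3.2⟩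
    calc |B ω| * |Rstar ω| ≤ (2 * Real.exp 2) * 1 :=
          mul_le_mul (hBabs ω) habs (abs_nonneg _) (by positivity)
      _ = 2 * Real.exp 2 := by ring
  have hBvint : Integrable (fun ω => B ω * (Rstar ω - r ω)) P := by
    have : (fun ω => B ω * (Rstar ω - r ω)) = fun ω => B ω * Rstar ω - B ω * r ω := by
      funext ω; ring
    rw [this]
    exact hBRint.sub hBrint
  have hconstD2int : Integrable (fun ω => 1 - c15 * D ω ^ 2) P :=
    (integrable_const 1).sub (hD2int.const_mul c15)
  have hf2int : Integrable (fun ω => 1 - c15 * D ω ^ 2 + B ω * (Rstar ω - r ω)) P :=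
    hconstD2int.add hBvint
  -- pointwise inequality
  have hpt : ∀ ω, f1 ω ≤ 1 - c15 * D ω ^ 2 + B ω * (Rstar ω - r ω) := by
    intro ω
    have e0 : -3 * η * ((W ω - r ω) ^ 2 - (Rstar ω - r ω) ^ 2)
        = -(3 * η) * D ω ^ 2 + T ω * (Rstar ω - r ω) := by
      simp only [hD_def, hT_def]; ring
    simp only [hf1_def]
    rw [e0, Real.exp_add]
    have hconv : Real.exp (T ω * (Rstar ω - r ω)) ≤
        r ω * Real.exp (T ω * (Rstar ω - 1)) + (1 - r ω) * Real.exp (T ω * Rstar ω) := by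
      have h := convexOn_exp.2 (Set.mem_univ (T ω * (Rstar ω - 1))) (Set.mem_univ (T ω * Rstar ω))
        (hr01 ω).1 (show (0:ℝ) ≤ 1 - r ω by linarith [(hr01 ω).2])
        (show r ω + (1 - r ω) = 1 by ring)
      simp only [smul_eq_mul] at h
      rw [show r ω * (T ω * (Rstar ω - 1)) + (1 - r ω) * (T ω * Rstar ω)
          = T ω * (Rstar ω - r ω) by ring] at h
      exact h
    have hexp_pos : (0:ℝ) < Real.exp (-(3 * η) * D ω ^ 2) := Real.exp_pos _
    have step1 : Real.exp (-(3 * η) * D ω ^ 2) * Real.exp (T ω * (Rstar ω - r ω)) ≤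
        Real.exp (-(3 * η) * D ω ^ 2) *
          (Rstar ω * Real.exp (T ω * (Rstar ω - 1)) + (1 - Rstar ω) * Real.exp (T ω * Rstar ω))
        + B ω * (Rstar ω - r ω) := by
      have h2 := mul_le_mul_of_nonneg_left hconv (le_of_lt hexp_pos)
      simp only [hB_def]
      nlinarith [h2]
    have step2 : Real.exp (-(3 * η) * D ω ^ 2) *
        (Rstar ω * Real.exp (T ω * (Rstar ω - 1)) + (1 - Rstar ω) * Real.exp (T ω * Rstar ω))
        ≤ 1 - c15 * D ω ^ 2 := by
      have hh := hoeff_scalar (Rstar ω) (T ω) (hRs01 ω).1 (hRs01 ω).2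
      have hA1 : Real.exp (-(3 * η) * D ω ^ 2) *
          (Rstar ω * Real.exp (T ω * (Rstar ω - 1)) + (1 - Rstar ω) * Real.exp (T ω * Rstar ω))
          ≤ Real.exp (-(3 * η) * D ω ^ 2) * Real.exp (T ω ^ 2 / 8) :=
        mul_le_mul_of_nonneg_left hh (le_of_lt hexp_pos)
      rw [← Real.exp_add] at hA1
      have hA2 : Real.exp (-(3 * η) * D ω ^ 2 + T ω ^ 2 / 8)
          ≤ Real.exp (-(1.5 * η * D ω ^ 2)) := by
        apply Real.exp_le_exp.mpr
        have hT2 : T ω ^ 2 = 36 * η ^ 2 * D ω ^ 2 := by simp only [hT_def]; ring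
        rw [hT2]
        nlinarith [mul_nonneg (mul_nonneg hη0.le (show (0:ℝ) ≤ 1/3 - η by linarith))
          (sq_nonneg (D ω))]
      have hx0 : (0:ℝ) ≤ 1.5 * η * D ω ^ 2 := by positivity
      have hx1 : 1.5 * η * D ω ^ 2 ≤ 1 / 2 := by
        have h5 : η * D ω ^ 2 ≤ 1 / 3 := by
          calc η * D ω ^ 2 ≤ η * 1 := mul_le_mul_of_nonneg_left (hDsq ω) hη0.le
            _ = η := mul_one η
            _ ≤ 1 / 3 := hη
        calc 1.5 * η * D ω ^ 2 = 1.5 * (η * D ω ^ 2) := by ring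
          _ ≤ 1.5 * (1 / 3) := mul_le_mul_of_nonneg_left h5 (by norm_num)
          _ ≤ 1 / 2 := by norm_num
      have hch := chord_lemma (1.5 * η * D ω ^ 2) hx0 hx1
      calc Real.exp (-(3 * η) * D ω ^ 2) *
          (Rstar ω * Real.exp (T ω * (Rstar ω - 1)) + (1 - Rstar ω) * Real.exp (T ω * Rstar ω))
          ≤ Real.exp (-(1.5 * η * D ω ^ 2)) := le_trans hA1 hA2
        _ ≤ 1 - 1.5 * η * D ω ^ 2 * Real.exp (-(1 / 2)) := hch
        _ = 1 - c15 * D ω ^ 2 := by rw [hc15_def]; ring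
    linarith [step1, step2]
  -- integral chain
  haveI : SigmaFinite (P.trim hGF) := inferInstance
  have hBv0 : ∫ ω, B ω * (Rstar ω - r ω) ∂P = 0 := by
    have key : ∫ ω, B ω * r ω ∂P = ∫ ω, B ω * Rstar ω ∂P := by
      have hBr' : Integrable (B * r) P := hBrint
      have hrint : Integrable r P := by
        apply hint r hr 1
        intro ω
        have h3 := hr01 ω
        rw [abs_le]; exact ⟨by linarith [h3.1], h3.2⟩
      have hpull := condExp_mul_of_stronglyMeasurable_left hBG.stronglyMeasurable hBr' hrint
      have h2 : B * P[r|mG] =ᵐ[P] fun ω => B ω * Rstar ω :=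
        hcond.mono fun ω hω => by simp only [Pi.mul_apply]; rw [hω]
      calc ∫ ω, B ω * r ω ∂P = ∫ ω, (P[B * r|mG]) ω ∂P := (integral_condExp hGF).symm
        _ = ∫ ω, B ω * Rstar ω ∂P := integral_congr_ae (hpull.trans h2)
    simp_rw [mul_sub]
    rw [integral_sub hBRint hBrint, key, sub_self]
  have hintD2 : ∫ ω, (1 - c15 * D ω ^ 2 + B ω * (Rstar ω - r ω)) ∂P
      = 1 - c15 * ∫ ω, D ω ^ 2 ∂P := by
    rw [integral_add hconstD2int hBvint, hBv0, add_zero,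
      integral_sub (integrable_const 1) (hD2int.const_mul c15), integral_const_mul]
    simp [measure_univ]
  have hmain : ∫ ω, f1 ω ∂P ≤ 1 - c15 * ∫ ω, D ω ^ 2 ∂P := by
    calc ∫ ω, f1 ω ∂P ≤ ∫ ω, (1 - c15 * D ω ^ 2 + B ω * (Rstar ω - r ω)) ∂P :=
          integral_mono hf1int hf2int (fun ω => hpt ω)
      _ = 1 - c15 * ∫ ω, D ω ^ 2 ∂P := hintD2
  have hIpos : (0:ℝ) < ∫ ω, f1 ω ∂P := by
    have hlow : ∀ ω, Real.exp (-1 : ℝ) ≤ f1 ω := fun ω => by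
      simp only [hf1_def]
      apply Real.exp_le_exp.mpr
      have := abs_le.mp (hZabs ω)
      nlinarith [this.1, this.2]
    have h := integral_mono (integrable_const (Real.exp (-1 : ℝ))) hf1int hlow
    rw [integral_const] at h
    simp [measure_univ] at h
    linarith [Real.exp_pos (-1 : ℝ)]
  have hlog : Real.log (∫ ω, f1 ω ∂P) ≤ -(c15 * ∫ ω, D ω ^ 2 ∂P) := by
    have hle : ∫ ω, f1 ω ∂P ≤ Real.exp (-(c15 * ∫ ω, D ω ^ 2 ∂P)) := by
      have := Real.add_one_le_exp (-(c15 * ∫ ω, D ω ^ 2 ∂P))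
      linarith
    calc Real.log (∫ ω, f1 ω ∂P) ≤ Real.log (Real.exp (-(c15 * ∫ ω, D ω ^ 2 ∂P))) :=
          Real.log_le_log hIpos hle
      _ = -(c15 * ∫ ω, D ω ^ 2 ∂P) := Real.log_exp _
  -- conclude
  have hsqrt : Real.sqrt (Real.exp 1) = Real.exp (1 / 2) := by
    rw [show Real.exp 1 = Real.exp (1 / 2) * Real.exp (1 / 2) by rw [← Real.exp_add]; norm_num,
      Real.sqrt_mul_self (Real.exp_pos _).le]
  have hD2eq : ∫ ω, (W ω - Rstar ω) ^ 2 ∂P = ∫ ω, D ω ^ 2 ∂P := by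
    simp only [hD_def]
  have hgoal_eq : 1.5 * η / Real.sqrt (Real.exp 1) * ∫ ω, (W ω - Rstar ω) ^ 2 ∂P
      = c15 * ∫ ω, D ω ^ 2 ∂P := by
    rw [hD2eq, hsqrt, hc15_def, Real.exp_neg]
    ring
  have hfinal : ∫ ω, Real.exp (-3 * η * ((W ω - r ω) ^ 2 - (Rstar ω - r ω) ^ 2)) ∂P
      = ∫ ω, f1 ω ∂P := by rw [hf1_def]
  rw [hfinal, hgoal_eq]
  linarith [hlog]
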